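/- Under the hypotheses of the previous statement, the Lagrange multipliers satisfy the linear system L λ = −b, where L_{jk} = Σ_{i=1}^d E[∂_{x_i}H_j(X) ∂_{x_i}H_k(X)] and b_j = E[ΔH_j(X)], expectations taken with X ∼ f̂. Consequently, if L is invertible, λ = −L⁻¹ b is determined uniquely by moments of derivatives of H under f̂. -/

import Mathlib

/-!
Since `∇f̂ = f̂ ∇(λ·H)`, the divergence of the field `f̂ ∇H_j` is `f̂ ΔH_j + f̂ ∇H_j · ∇(λ·H)`,
whose integral is `b_j + (L λ)_j`. The integral of the divergence of an integrable `C¹` field with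
integrable divergence vanishes: multiply by the dilated bumps `χ(x / n)` and integrate by parts;
the error term carries the factor `∇χ(x / n) = O(1 / n)`.
-/

open MeasureTheory Filter Topology

section Cutoff

variable {E : Type*} [NormedAddCommGroup E] [NormedSpace ℝ E] [HasContDiffBump E]

noncomputable def bumpCutoff (c : ContDiffBump (0 : E)) (n : ℕ) (x : E) : ℝ :=
  c (((n : ℝ) + 1)⁻¹ • x)

namespace bumpCutoff

variable (c : ContDiffBump (0 : E))

theorem contDiff (n : ℕ) : ContDiff ℝ 1 (bumpCutoff c n) :=
  c.contDiff.comp (contDiff_const_smul _)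

theorem hasCompactSupport [FiniteDimensional ℝ E] (n : ℕ) :
    HasCompactSupport (bumpCutoff c n) :=
  c.hasCompactSupport.comp_smul (by positivity)

theorem abs_le_one (n : ℕ) (x : E) : |bumpCutoff c n x| ≤ 1 :=
  show |c _| ≤ 1 from
  abs_le.2 ⟨by linarith [c.nonneg (x := ((n : ℝ) + 1)⁻¹ • x)], c.le_one⟩

theorem eventually_eq_one (x : E) : ∀ᶠ n in atTop, bumpCutoff c n x = 1 := by
  have h : Tendsto (fun n : ℕ => ((n : ℝ) + 1)⁻¹ • x) atTop (𝓝 0) := by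
    simpa [one_div] using (tendsto_one_div_add_atTop_nhds_zero_nat (𝕜 := ℝ)).smul_const x
  exact h.eventually c.eventuallyEq_one

theorem exists_norm_fderiv_le [FiniteDimensional ℝ E] :
    ∃ K : ℝ, ∀ n x, ‖fderiv ℝ (bumpCutoff c n) x‖ ≤ K * ((n : ℝ) + 1)⁻¹ := by
  obtain ⟨K, hK⟩ := ContDiff.lipschitzWith_of_hasCompactSupport c.hasCompactSupport
    (c.contDiff (n := 1)) one_ne_zero
  refine ⟨K, fun n x => ?_⟩
  have h := norm_fderiv_le_of_lipschitz ℝ (x₀ := x) (hK.comp (lipschitzWith_smul ((n + 1 : ℝ)⁻¹)))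
  simp only [Function.comp_def, nnnorm_inv, NNReal.coe_mul, NNReal.coe_inv, coe_nnnorm,
    Real.norm_eq_abs, abs_of_pos (by positivity : (0 : ℝ) < n + 1)] at h
  exact h

variable [MeasurableSpace E] {μ : Measure E}

theorem tendsto_integral_mul [BorelSpace E] {f : E → ℝ} (hf : Integrable f μ) :
    Tendsto (fun n => ∫ x, bumpCutoff c n x * f x ∂μ) atTop (𝓝 (∫ x, f x ∂μ)) := by
  refine tendsto_integral_filter_of_dominated_convergence (fun x => ‖f x‖)
    (Eventually.of_forall fun n => ((contDiff c n).continuous.aestronglyMeasurable.mul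
      hf.aestronglyMeasurable)) (Eventually.of_forall fun n => Eventually.of_forall fun x => ?_)
    hf.norm (Eventually.of_forall fun x => ?_)
  · rw [norm_mul, Real.norm_eq_abs]
    exact mul_le_of_le_one_left (norm_nonneg _) (abs_le_one c n x)
  · exact tendsto_const_nhds.congr' <|
      (eventually_eq_one c x).mono fun n hn => by simp only [hn, one_mul]

theorem tendsto_integral_fderiv_mul [FiniteDimensional ℝ E] {u : E → ℝ} (hu : Integrable u μ)
    (v : E) :
    Tendsto (fun n => ∫ x, fderiv ℝ (bumpCutoff c n) x v * u x ∂μ) atTop (𝓝 0) := by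
  obtain ⟨K, hK⟩ := exists_norm_fderiv_le c
  have hbound : ∀ n, ‖∫ x, fderiv ℝ (bumpCutoff c n) x v * u x ∂μ‖
      ≤ K * ‖v‖ * (∫ x, ‖u x‖ ∂μ) * ((n : ℝ) + 1)⁻¹ := fun n =>
    calc ‖∫ x, fderiv ℝ (bumpCutoff c n) x v * u x ∂μ‖
        ≤ ∫ x, K * ((n : ℝ) + 1)⁻¹ * ‖v‖ * ‖u x‖ ∂μ := by
          refine norm_integral_le_of_norm_le (hu.norm.const_mul _)
            (Eventually.of_forall fun x => ?_)
          rw [norm_mul]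
          gcongr
          exact (ContinuousLinearMap.le_opNorm _ v).trans
            (mul_le_mul_of_nonneg_right (hK n x) (norm_nonneg v))
      _ = K * ‖v‖ * (∫ x, ‖u x‖ ∂μ) * ((n : ℝ) + 1)⁻¹ := by
          rw [integral_const_mul]; ring
  refine squeeze_zero_norm hbound ?_
  simpa [one_div] using (tendsto_one_div_add_atTop_nhds_zero_nat (𝕜 := ℝ)).const_mul
    (K * ‖v‖ * ∫ x, ‖u x‖ ∂μ)

end bumpCutoff

end Cutoff

theorem integrable_mul_of_integrable_mul_self_mul {α : Type*} [MeasurableSpace α] {ν : Measure α}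
    {a w : α → ℝ} (hw0 : ∀ x, 0 ≤ w x) (hw : Integrable w ν)
    (ha : Integrable (fun x => a x * a x * w x) ν)
    (hm : AEStronglyMeasurable (fun x => a x * w x) ν) :
    Integrable (fun x => a x * w x) ν := by
  refine ((hw.add ha).div_const 2).mono' hm (Eventually.of_forall fun x => ?_)
  rw [norm_mul, Real.norm_eq_abs, Real.norm_eq_abs, abs_of_nonneg (hw0 x), Pi.add_apply]
  -- AM-GM: `|a| ≤ (1 + a²) / 2`
  nlinarith [hw0 x, mul_nonneg (hw0 x) (sq_nonneg (|a x| - 1)), sq_abs (a x)]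

section

variable {E : Type*} [NormedAddCommGroup E] [NormedSpace ℝ E]

theorem fderiv_sum_const_mul_apply {κ : Type*} [Fintype κ] {H : κ → E → ℝ}
    (hH : ∀ k, Differentiable ℝ (H k)) (lam : κ → ℝ) (x v : E) :
    fderiv ℝ (fun y => ∑ k, lam k * H k y) x v = ∑ k, lam k * fderiv ℝ (H k) x v := by
  rw [(HasFDerivAt.fun_sum fun k _ => ((hH k) x).hasFDerivAt.const_mul (lam k)).fderiv]
  simp only [sum_apply, smul_apply, smul_eq_mul]

theorem fderiv_exp_comp_mul_const {g : E → ℝ} (hg : Differentiable ℝ g) (c : ℝ) (x : E) :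
    fderiv ℝ (fun y => Real.exp (g y) * c) x = (Real.exp (g x) * c) • fderiv ℝ g x := by
  rw [((hg x).hasFDerivAt.exp.mul_const c).fderiv, smul_smul, mul_comm]

variable [FiniteDimensional ℝ E] [MeasurableSpace E] [BorelSpace E] {μ : Measure E}
  [μ.IsAddHaarMeasure]

theorem integral_mul_fderiv_eq_neg_fderiv_mul_of_hasCompactSupport {χ u : E → ℝ}
    (hχ : ContDiff ℝ 1 χ) (hχc : HasCompactSupport χ) (hu : ContDiff ℝ 1 u) (v : E) :
    ∫ x, χ x * fderiv ℝ u x v ∂μ = -∫ x, fderiv ℝ χ x v * u x ∂μ := by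
  have hχ' : HasCompactSupport fun x => fderiv ℝ χ x v :=
    (hχc.fderiv ℝ).comp_left (g := fun L : E →L[ℝ] ℝ => L v) rfl
  refine integral_mul_fderiv_eq_neg_fderiv_mul_of_integrable ?_ ?_ ?_
    (fun x _ => hχ.differentiable one_ne_zero x) (fun x _ => hu.differentiable one_ne_zero x)
  · exact (((hχ.continuous_fderiv one_ne_zero).clm_apply continuous_const).mul
      hu.continuous).integrable_of_hasCompactSupport hχ'.mul_right
  · exact (hχ.continuous.mul ((hu.continuous_fderiv one_ne_zero).clm_apply
      continuous_const)).integrable_of_hasCompactSupport hχc.mul_right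
  · exact (hχ.continuous.mul hu.continuous).integrable_of_hasCompactSupport hχc.mul_right

theorem integral_sum_fderiv_eq_zero {ι : Type*} [Fintype ι] {u : ι → E → ℝ} (v : ι → E)
    (hu : ∀ i, ContDiff ℝ 1 (u i)) (hui : ∀ i, Integrable (u i) μ)
    (hdiv : Integrable (fun x => ∑ i, fderiv ℝ (u i) x (v i)) μ) :
    ∫ x, ∑ i, fderiv ℝ (u i) x (v i) ∂μ = 0 := by
  let c : ContDiffBump (0 : E) := ⟨1, 2, one_pos, one_lt_two⟩
  have hcompact : ∀ n i, Integrable (fun x => bumpCutoff c n x * fderiv ℝ (u i) x (v i)) μ :=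
    fun n i => ((bumpCutoff.contDiff c n).continuous.mul ((hu i).continuous_fderiv
      one_ne_zero |>.clm_apply continuous_const)).integrable_of_hasCompactSupport
      (bumpCutoff.hasCompactSupport c n).mul_right
  have hparts : ∀ n, ∫ x, bumpCutoff c n x * ∑ i, fderiv ℝ (u i) x (v i) ∂μ
      = -∑ i, ∫ x, fderiv ℝ (bumpCutoff c n) x (v i) * u i x ∂μ := fun n => by
    simp_rw [Finset.mul_sum]
    rw [integral_finsetSum _ fun i _ => hcompact n i, ← Finset.sum_neg_distrib]
    exact Finset.sum_congr rfl fun i _ =>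
      integral_mul_fderiv_eq_neg_fderiv_mul_of_hasCompactSupport (bumpCutoff.contDiff c n)
        (bumpCutoff.hasCompactSupport c n) (hu i) (v i)
  have hzero : Tendsto (fun n => ∫ x, bumpCutoff c n x * ∑ i, fderiv ℝ (u i) x (v i) ∂μ)
      atTop (𝓝 0) := by
    simp_rw [hparts]
    simpa using (tendsto_finsetSum Finset.univ fun i _ =>
      bumpCutoff.tendsto_integral_fderiv_mul c (hui i) (v i)).neg
  exact tendsto_nhds_unique (bumpCutoff.tendsto_integral_mul c hdiv) hzero

theorem integral_laplacian_mul_eq_neg_integral_grad_mul {ι : Type*} [Fintype ι] (v : ι → E)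
    {w g h : E → ℝ} (hw0 : ∀ x, 0 ≤ w x) (hw : Integrable w μ) (hwC : ContDiff ℝ 1 w)
    (hwg : ∀ x, fderiv ℝ w x = w x • fderiv ℝ g x) (hh : ContDiff ℝ 2 h)
    (hsq : ∀ i, Integrable (fun x => fderiv ℝ h x (v i) * fderiv ℝ h x (v i) * w x) μ)
    (hgrad : Integrable (fun x => ∑ i, fderiv ℝ h x (v i) * fderiv ℝ g x (v i) * w x) μ)
    (hlap : Integrable
      (fun x => (∑ i, fderiv ℝ (fun y => fderiv ℝ h y (v i)) x (v i)) * w x) μ) :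
    ∫ x, (∑ i, fderiv ℝ (fun y => fderiv ℝ h y (v i)) x (v i)) * w x ∂μ
      = -∫ x, ∑ i, fderiv ℝ h x (v i) * fderiv ℝ g x (v i) * w x ∂μ := by
  have hdh : ∀ i, ContDiff ℝ 1 fun x => fderiv ℝ h x (v i) := fun i =>
    (hh.fderiv_right (m := 1) le_rfl).clm_apply contDiff_const
  let u : ι → E → ℝ := fun i x => fderiv ℝ h x (v i) * w x
  have hu : ∀ i, ContDiff ℝ 1 (u i) := fun i => (hdh i).mul hwC
  have hdiv : ∀ x, ∑ i, fderiv ℝ (u i) x (v i)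
      = (∑ i, fderiv ℝ (fun y => fderiv ℝ h y (v i)) x (v i)) * w x
        + ∑ i, fderiv ℝ h x (v i) * fderiv ℝ g x (v i) * w x := fun x => by
    rw [Finset.sum_mul, ← Finset.sum_add_distrib]
    refine Finset.sum_congr rfl fun i _ => ?_
    rw [fderiv_fun_mul ((hdh i).differentiable one_ne_zero x) (hwC.differentiable one_ne_zero x),
      hwg x]
    simp only [add_apply, smul_apply, smul_eq_mul]
    ring
  have hzero := integral_sum_fderiv_eq_zero (μ := μ) v hu
    (fun i => integrable_mul_of_integrable_mul_self_mul hw0 hw (hsq i)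
      ((hu i).continuous.aestronglyMeasurable))
    ((hlap.add hgrad).congr (Eventually.of_forall fun x => (hdiv x).symm))
  simp only [hdiv] at hzero
  rw [integral_add hlap hgrad] at hzero
  linarith

theorem sum_mul_integral_grad_mul_add_integral_laplacian_mul_eq_zero {ι κ : Type*} [Fintype ι]
    [Fintype κ] (v : ι → E) {H : κ → E → ℝ} (hH : ∀ k, ContDiff ℝ 2 (H k)) (lam : κ → ℝ)
    {w : E → ℝ} (hw0 : ∀ x, 0 ≤ w x) (hw : Integrable w μ) (hwC : ContDiff ℝ 1 w)
    (hwH : ∀ x, fderiv ℝ w x = w x • fderiv ℝ (fun y => ∑ k, lam k * H k y) x)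
    (hgrad : ∀ i j k, Integrable
      (fun x => fderiv ℝ (H j) x (v i) * fderiv ℝ (H k) x (v i) * w x) μ)
    (j : κ) (hlap : Integrable
      (fun x => (∑ i, fderiv ℝ (fun y => fderiv ℝ (H j) y (v i)) x (v i)) * w x) μ) :
    ∑ k, lam k * ∑ i, ∫ x, fderiv ℝ (H j) x (v i) * fderiv ℝ (H k) x (v i) * w x ∂μ
      + ∫ x, (∑ i, fderiv ℝ (fun y => fderiv ℝ (H j) y (v i)) x (v i)) * w x ∂μ = 0 := by
  have hHd : ∀ k, Differentiable ℝ (H k) := fun k => (hH k).differentiable two_ne_zero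
  have hexpand : ∀ x, ∑ i, fderiv ℝ (H j) x (v i)
        * fderiv ℝ (fun y => ∑ k, lam k * H k y) x (v i) * w x
      = ∑ k, lam k * ∑ i, fderiv ℝ (H j) x (v i) * fderiv ℝ (H k) x (v i) * w x := fun x => by
    simp only [fderiv_sum_const_mul_apply hHd, Finset.mul_sum, Finset.sum_mul]
    rw [Finset.sum_comm]
    exact Finset.sum_congr rfl fun k _ => Finset.sum_congr rfl fun i _ => by ring
  have hint : ∀ k, Integrable (fun x => lam k * ∑ i, fderiv ℝ (H j) x (v i)
      * fderiv ℝ (H k) x (v i) * w x) μ :=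
    fun k => (integrable_finsetSum _ fun i _ => hgrad i j k).const_mul (lam k)
  have h := integral_laplacian_mul_eq_neg_integral_grad_mul v hw0 hw hwC hwH (hH j)
    (fun i => hgrad i j j) (by simpa only [hexpand] using integrable_finsetSum _ fun k _ => hint k)
    hlap
  simp only [hexpand, integral_finsetSum _ fun k _ => hint k, integral_const_mul,
    integral_finsetSum _ fun i _ => hgrad i j _] at h
  rw [h, add_neg_cancel]

end

theorem stmt7_general {d N : ℕ} (H : Fin N → (Fin d → ℝ) → ℝ) (hH : ∀ j, ContDiff ℝ 2 (H j))
    (lam : Fin N → ℝ) (Z : ℝ)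
    (hZint : Integrable (fun x => Real.exp (∑ k, lam k * H k x)))
    (hZpos : 0 < Z)
    (fhat : (Fin d → ℝ) → ℝ)
    (hfhat : ∀ x, fhat x = Real.exp (∑ k, lam k * H k x) / Z)
    (hint1 : ∀ (i : Fin d) (j k : Fin N), Integrable (fun x =>
      fderiv ℝ (H j) x (Pi.single i 1) * fderiv ℝ (H k) x (Pi.single i 1) * fhat x))
    (hint2 : ∀ j : Fin N, Integrable (fun x =>
      (∑ i : Fin d, fderiv ℝ (fun y => fderiv ℝ (H j) y (Pi.single i 1)) x (Pi.single i 1))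
        * fhat x))
    (L : Matrix (Fin N) (Fin N) ℝ)
    (hL : ∀ j k, L j k = ∑ i : Fin d, ∫ x,
      fderiv ℝ (H j) x (Pi.single i 1) * fderiv ℝ (H k) x (Pi.single i 1) * fhat x)
    (b : Fin N → ℝ)
    (hb : ∀ j, b j = ∫ x,
      (∑ i : Fin d, fderiv ℝ (fun y => fderiv ℝ (H j) y (Pi.single i 1)) x (Pi.single i 1))
        * fhat x) :
    L.mulVec lam = -b ∧ (IsUnit L.det → lam = -(L⁻¹.mulVec b)) := by
  have hgC : ContDiff ℝ 1 fun x => ∑ k, lam k * H k x :=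
    ContDiff.sum fun k _ => contDiff_const.mul ((hH k).of_le one_le_two)
  have hfhat_eq : fhat = fun x => Real.exp (∑ k, lam k * H k x) * Z⁻¹ :=
    funext fun x => by rw [hfhat, div_eq_mul_inv]
  have hfhat_fderiv : ∀ x, fderiv ℝ fhat x = fhat x • fderiv ℝ (fun y => ∑ k, lam k * H k y) x := by
    rw [hfhat_eq]
    exact fderiv_exp_comp_mul_const (hgC.differentiable one_ne_zero) Z⁻¹
  have hsystem : L.mulVec lam = -b := funext fun j => by
    have h := sum_mul_integral_grad_mul_add_integral_laplacian_mul_eq_zero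
      (fun i => Pi.single i 1) hH lam (fun x => (hfhat x).symm ▸ by positivity)
      (hfhat_eq ▸ hZint.mul_const Z⁻¹) (hfhat_eq ▸ (Real.contDiff_exp.comp hgC).mul contDiff_const)
      hfhat_fderiv hint1 j (hint2 j)
    simp only [← hL, ← hb, mul_comm (lam _)] at h
    exact eq_neg_of_add_eq_zero_left h
  refine ⟨hsystem, fun hdet => ?_⟩
  rw [← Matrix.mulVec_neg, ← hsystem, Matrix.mulVec_mulVec, Matrix.nonsing_inv_mul _ hdet,
    Matrix.one_mulVec]

/-- The Lagrange multipliers satisfy the linear system `L λ = -b` where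
`L_{jk} = ∑ i E[∂ᵢH_j ∂ᵢH_k]` and `b_j = E[ΔH_j]` under `X ∼ f̂`; if `L` is invertible,
`λ = -L⁻¹ b`. -/
theorem stmt7 {d N : ℕ} (H : Fin N → (Fin d → ℝ) → ℝ) (hH : ∀ j, ContDiff ℝ 2 (H j))
    (lam : Fin N → ℝ) (Z : ℝ)
    (hZ : Z = ∫ x, Real.exp (∑ k, lam k * H k x))
    (hZint : Integrable (fun x => Real.exp (∑ k, lam k * H k x)))
    (hZpos : 0 < Z)
    (fhat : (Fin d → ℝ) → ℝ)
    (hfhat : ∀ x, fhat x = Real.exp (∑ k, lam k * H k x) / Z)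
    (hdecay : ∀ (j : Fin N) (i : Fin d),
      Tendsto (fun x : Fin d → ℝ => fhat x * fderiv ℝ (H j) x (Pi.single i 1))
        (cocompact _) (nhds 0))
    (hint1 : ∀ (i : Fin d) (j k : Fin N), Integrable (fun x =>
      fderiv ℝ (H j) x (Pi.single i 1) * fderiv ℝ (H k) x (Pi.single i 1) * fhat x))
    (hint2 : ∀ j : Fin N, Integrable (fun x =>
      (∑ i : Fin d, fderiv ℝ (fun y => fderiv ℝ (H j) y (Pi.single i 1)) x (Pi.single i 1))
        * fhat x))
    (L : Matrix (Fin N) (Fin N) ℝ)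
    (hL : ∀ j k, L j k = ∑ i : Fin d, ∫ x,
      fderiv ℝ (H j) x (Pi.single i 1) * fderiv ℝ (H k) x (Pi.single i 1) * fhat x)
    (b : Fin N → ℝ)
    (hb : ∀ j, b j = ∫ x,
      (∑ i : Fin d, fderiv ℝ (fun y => fderiv ℝ (H j) y (Pi.single i 1)) x (Pi.single i 1))
        * fhat x) :
    L.mulVec lam = -b ∧ (IsUnit L.det → lam = -(L⁻¹.mulVec b)) :=
  stmt7_general H hH lam Z hZint hZpos fhat hfhat hint1 hint2 L hL b hb
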